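/- arXiv:2406.05480 — 2 statements merged into one kernel-verified Lean document; each statement's English description precedes it below -/
import Mathlib

section
/- Let (Y_i)_{i ∈ I} be a family of Esakia root systems. For each i ∈ I let p_i : ⊗Y_i → Y_i send C to π_i(m(C)), where m(C) is the least element of C. Then each p_i is a continuous p-morphism, and ⊗Y_i together with the maps p_i is the product of (Y_i)_{i ∈ I} in the category of Esakia root systems and continuous p-morphisms: for every Esakia root system Z and every family of continuous p-morphisms f_i : Z → Y_i there is a unique continuous p-morphism g : Z → ⊗Y_i with p_i ∘ g = f_i for all i ∈ I. -/
/-!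
The root `m C` of a chain is its least point, so `pᵢ` pulls a clopen upset `U` back to
`□ πᵢ⁻¹U` and a clopen downset to `◇ πᵢ⁻¹U`; since clopen up- and downsets form a subbasis of a
compact Priestley space, `pᵢ` is continuous. For `C ∈ ⊗Yᵢ` one has `πᵢ[C] = ↑pᵢ(C)`, and every
`c ∈ C` is the root of the `⊴`-successor `C ∩ ↑c`, which gives the p-morphism condition.

Given `fᵢ : Z → Yᵢ`, put `F = (fᵢ)ᵢ` and `g z = F[↑z]`: a chain because `Z` is a root system,
in `⊗Yᵢ` because the `fᵢ` are p-morphisms, continuous because `g⁻¹(◇V) = ↓F⁻¹V` and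
`g⁻¹(□V) = (↓F⁻¹Vᶜ)ᶜ` are clopen in the Esakia space `Z`. Any other such `g'` satisfies
`g' z = F[↑z]`, since each `x ∈ g' z` is the root of `g' z'` for some `z' ≥ z`.
-/

open Set TopologicalSpace

/-- The set of nonempty closed chains of a Priestley space `X`. -/
def CC (X : Type*) [TopologicalSpace X] [Preorder X] : Set (Set X) :=
  {C | C.Nonempty ∧ IsClosed C ∧ IsChain (· ≤ ·) C}

variable {X : Type*} [TopologicalSpace X] [Preorder X]

/-- `□A = {C ∈ CC(X) | C ⊆ A}`. -/
def ccBox (A : Set X) : Set ↥(CC X) := {C | (C : Set X) ⊆ A}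

/-- `◇A = {C ∈ CC(X) | C ∩ A ≠ ∅}`. -/
def ccDia (A : Set X) : Set ↥(CC X) := {C | ((C : Set X) ∩ A).Nonempty}

/-- The Vietoris topology on `CC X`, generated by the subbasis `{□V, ◇V | V clopen}`. -/
instance ccTop : TopologicalSpace ↥(CC X) :=
  generateFrom {S | ∃ V : Set X, IsClopen V ∧ (S = ccBox V ∨ S = ccDia V)}

/-- The order `⊴` on closed chains: `C₁ ⊴ C₂` iff `C₂ ⊆ C₁` and `C₂` is an upset in `C₁`. -/
def lec (C₁ C₂ : Set X) : Prop :=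
  C₂ ⊆ C₁ ∧ ∀ x ∈ C₂, ∀ y ∈ C₁, x ≤ y → y ∈ C₂

/-- The tensor product of a family of Esakia root systems: the nonempty closed chains of
the product whose projections are all upsets. -/
def tensor {I : Type*} (Y : I → Type*) [∀ i, TopologicalSpace (Y i)] [∀ i, Preorder (Y i)] :
    Set ↥(CC (∀ i, Y i)) :=
  {C | ∀ i, IsUpperSet ((fun f => f i) '' (C : Set (∀ i, Y i)))}

section Priestley

variable {α β : Type*} [TopologicalSpace α] [TopologicalSpace β]

instance PriestleySpace.toOrderClosedTopology [Preorder α] [PriestleySpace α] :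
    OrderClosedTopology α where
  isClosed_le' := by
    refine isOpen_compl_iff.1 (isOpen_iff_forall_mem_open.2 fun p hp => ?_)
    obtain ⟨U, hU, hUup, hp₁, hp₂⟩ := exists_isClopen_upper_of_not_le hp
    exact ⟨U ×ˢ Uᶜ, fun q hq hle => hq.2 (hUup hle hq.1), hU.isOpen.prod hU.compl.isOpen,
      hp₁, hp₂⟩

instance Pi.priestleySpace {ι : Type*} {π : ι → Type*} [∀ i, TopologicalSpace (π i)]
    [∀ i, Preorder (π i)] [∀ i, PriestleySpace (π i)] : PriestleySpace (∀ i, π i) where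
  priestley {x y} hxy := by
    obtain ⟨i, hi⟩ : ∃ i, ¬x i ≤ y i := by simpa [Pi.le_def] using hxy
    obtain ⟨U, hU, hUup, hx, hy⟩ := exists_isClopen_upper_of_not_le hi
    exact ⟨(· i) ⁻¹' U, hU.preimage (continuous_apply i), fun a b hab ha => hUup (hab i) ha,
      hx, hy⟩

theorem IsCompact.exists_isLeast_of_isChain [Preorder α] [ClosedIicTopology α] {s : Set α}
    (hs : IsCompact s) (hc : IsChain (· ≤ ·) s) (ne_s : s.Nonempty) : ∃ x, IsLeast s x := by
  have : Nonempty s := ne_s.to_subtype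
  suffices (s ∩ ⋂ x : s, Iic x.1).Nonempty from
    ⟨this.choose, this.choose_spec.1, fun y hy => mem_iInter.1 this.choose_spec.2 ⟨y, hy⟩⟩
  by_contra H
  have hdir : Directed (· ⊇ ·) fun x : s => Iic x.1 := fun x y =>
    (hc.total x.2 y.2).elim (fun h => ⟨x, subset_rfl, Iic_subset_Iic.2 h⟩)
      (fun h => ⟨y, Iic_subset_Iic.2 h, subset_rfl⟩)
  obtain ⟨x, hx⟩ := hs.elim_directed_family_closed _ (fun _ => isClosed_Iic)
    (not_nonempty_iff_eq_empty.1 H) hdir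
  exact (not_nonempty_iff_eq_empty.2 hx) ⟨x, x.2, le_rfl⟩

theorem continuous_of_isOpen_preimage_isClopen_upper_lower [PartialOrder α] [CompactSpace α]
    [PriestleySpace α] {f : β → α}
    (hup : ∀ U : Set α, IsClopen U → IsUpperSet U → IsOpen (f ⁻¹' U))
    (hlow : ∀ U : Set α, IsClopen U → IsLowerSet U → IsOpen (f ⁻¹' U)) : Continuous f := by
  refine continuous_def.2 fun O hO => isOpen_iff_forall_mem_open.2 fun b hb => ?_
  let W := {U : Set α // IsClopen U ∧ (IsUpperSet U ∨ IsLowerSet U) ∧ f b ∈ U}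
  have hsep : Oᶜ ∩ ⋂ U : W, U.1 = ∅ := by
    refine eq_empty_iff_forall_notMem.2 fun y ⟨hyO, hyW⟩ => ?_
    obtain ⟨U, hU, hUul, hbU, hyU⟩ :=
      exists_isClopen_upper_or_lower_of_ne fun h : f b = y => hyO (h ▸ hb)
    exact hyU (mem_iInter.1 hyW ⟨U, hU, hUul, hbU⟩)
  obtain ⟨u, hu⟩ := hO.isClosed_compl.isCompact.elim_finite_subfamily_closed _
    (fun U : W => U.2.1.isClosed) hsep
  refine ⟨f ⁻¹' ⋂ U ∈ u, U.1, fun a ha => ?_, ?_, mem_iInter₂.2 fun U _ => U.2.2.2⟩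
  · by_contra haO
    exact (eq_empty_iff_forall_notMem.1 hu) (f a) ⟨haO, ha⟩
  · rw [preimage_iInter₂]
    exact isOpen_biInter_finset fun U _ => U.2.2.1.elim (hup _ U.2.1) (hlow _ U.2.1)

end Priestley

section ClosedChains

section Order

variable {α : Type*} [Preorder α]

theorem le_of_lec {C₁ C₂ : Set α} {a b : α} (h : lec C₁ C₂) (ha : IsLeast C₁ a)
    (hb : IsLeast C₂ b) : a ≤ b :=
  ha.2 (h.1 hb.1)

theorem lec_inter_Ici (C : Set α) (c : α) : lec C (C ∩ Ici c) :=
  ⟨inter_subset_left, fun _ hx _ hy hxy => ⟨hy, hx.2.trans hxy⟩⟩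

end Order

variable {α : Type*} [TopologicalSpace α]

theorem isOpen_ccBox [Preorder α] {V : Set α} (hV : IsClopen V) : IsOpen (ccBox V) :=
  isOpen_generateFrom_of_mem ⟨V, hV, Or.inl rfl⟩

theorem isOpen_ccDia [Preorder α] {V : Set α} (hV : IsClopen V) : IsOpen (ccDia V) :=
  isOpen_generateFrom_of_mem ⟨V, hV, Or.inr rfl⟩

theorem inter_Ici_mem_CC [Preorder α] [ClosedIciTopology α] {C : Set α} (hC : C ∈ CC α) {c : α}
    (hc : c ∈ C) : C ∩ Ici c ∈ CC α :=
  ⟨⟨c, hc, self_mem_Ici⟩, hC.2.1.inter isClosed_Ici, hC.2.2.mono inter_subset_left⟩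

theorem continuous_of_isLeast [PartialOrder α] [CompactSpace α] [PriestleySpace α]
    {m : CC α → α} (hm : ∀ C : CC α, IsLeast (C : Set α) (m C)) : Continuous m := by
  refine continuous_of_isOpen_preimage_isClopen_upper_lower (fun U hU hUup => ?_)
    (fun U hU hUlow => ?_)
  · convert isOpen_ccBox hU using 1
    ext C
    exact ⟨fun hC _ hx => hUup ((hm C).2 hx) hC, fun hC => hC (hm C).1⟩
  · convert isOpen_ccDia hU using 1
    ext C
    exact ⟨fun hC => ⟨m C, (hm C).1, hC⟩, fun ⟨_, hxC, hxU⟩ => hUlow ((hm C).2 hxC) hxU⟩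

end ClosedChains

section PrincipalUpsets

variable {Z α : Type*} [PartialOrder Z] {F : Z → α} {z : Z}

theorem isLeast_image_Ici [Preorder α] (hFm : Monotone F) (z : Z) :
    IsLeast (F '' Ici z) (F z) :=
  ⟨mem_image_of_mem F self_mem_Ici, forall_mem_image.2 fun _ hu => hFm hu⟩

theorem lec_image_Ici [PartialOrder α] (hFm : Monotone F) {z₁ z₂ : Z}
    (hroot : IsChain (· ≤ ·) (Ici z₁)) (h : z₁ ≤ z₂) : lec (F '' Ici z₁) (F '' Ici z₂) := by
  refine ⟨image_mono (Ici_subset_Ici.2 h), ?_⟩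
  rintro _ ⟨u, hu, rfl⟩ _ ⟨v, hv, rfl⟩ hle
  rcases hroot.total (h.trans hu) hv with huv | hvu
  · exact ⟨v, hu.trans huv, rfl⟩
  · exact ⟨u, hu, le_antisymm hle (hFm hvu)⟩

variable [TopologicalSpace Z] [TopologicalSpace α]

theorem image_Ici_mem_CC [Preorder α] [CompactSpace Z] [ClosedIciTopology Z] [T2Space α]
    (hFc : Continuous F) (hFm : Monotone F) (hroot : IsChain (· ≤ ·) (Ici z)) :
    F '' Ici z ∈ CC α :=
  ⟨nonempty_Ici.image F, (isClosed_Ici.isCompact.image hFc).isClosed, hFm.isChain_image hroot⟩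

theorem exists_image_Ici_eq_of_lec [Preorder α] [CompactSpace Z] [OrderClosedTopology Z]
    (hFc : Continuous F) (hFm : Monotone F) (hroot : IsChain (· ≤ ·) (Ici z)) {K : Set α}
    (hK : IsClosed K) (hKne : K.Nonempty) (h : lec (F '' Ici z) K) :
    ∃ z', z ≤ z' ∧ F '' Ici z' = K := by
  obtain ⟨hsub, hup⟩ := h
  have hS : (Ici z ∩ F ⁻¹' K).Nonempty := by
    obtain ⟨k, hk⟩ := hKne
    obtain ⟨u, hu, rfl⟩ := hsub hk
    exact ⟨u, hu, hk⟩
  obtain ⟨z₀, ⟨hz₀, hz₀K⟩, hz₀min⟩ := (isClosed_Ici.inter (hK.preimage hFc)).isCompact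
    |>.exists_isLeast_of_isChain (hroot.mono inter_subset_left) hS
  refine ⟨z₀, hz₀, Subset.antisymm ?_ fun k hk => ?_⟩
  · rintro _ ⟨u, hu, rfl⟩
    exact hup _ hz₀K _ ⟨u, hz₀.trans hu, rfl⟩ (hFm hu)
  · obtain ⟨u, hu, rfl⟩ := hsub hk
    exact ⟨u, hz₀min ⟨hu, hk⟩, rfl⟩

theorem continuous_of_coe_eq_image_Ici [Preorder α]
    (hEsa : ∀ V : Set Z, IsClopen V → IsClopen {x : Z | ∃ y ∈ V, x ≤ y}) (hFc : Continuous F)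
    {g : Z → CC α} (hg : ∀ z, (g z : Set α) = F '' Ici z) : Continuous g := by
  refine continuous_generateFrom_iff.2 ?_
  rintro _ ⟨V, hV, rfl | rfl⟩
  · have hbox : g ⁻¹' ccBox V = {x : Z | ∃ y ∈ F ⁻¹' Vᶜ, x ≤ y}ᶜ := by
      ext z
      simp only [mem_preimage, ccBox, hg, image_subset_iff, mem_compl_iff, mem_ofPred_eq]
      exact ⟨fun h ⟨y, hyV, hzy⟩ => hyV (h hzy), fun h y hzy => by_contra fun hy => h ⟨y, hy, hzy⟩⟩
    rw [hbox]
    exact (hEsa _ (hV.compl.preimage hFc)).compl.isOpen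
  · have hdia : g ⁻¹' ccDia V = {x : Z | ∃ y ∈ F ⁻¹' V, x ≤ y} := by
      ext z
      simp only [mem_preimage, ccDia, hg, mem_ofPred_eq, image_inter_nonempty_iff]
      exact ⟨fun ⟨y, hzy, hyV⟩ => ⟨y, hyV, hzy⟩, fun ⟨y, hyV, hzy⟩ => ⟨y, hzy, hyV⟩⟩
    rw [hdia]
    exact (hEsa _ (hV.preimage hFc)).isOpen

end PrincipalUpsets

section Tensor

variable {I : Type*} {Y : I → Type*} [∀ i, TopologicalSpace (Y i)] [∀ i, PartialOrder (Y i)]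

theorem image_eval_eq_Ici {C : CC (∀ i, Y i)} (hC : C ∈ tensor Y) {a : ∀ i, Y i}
    (ha : IsLeast (C : Set (∀ i, Y i)) a) (i : I) :
    (fun f => f i) '' (C : Set (∀ i, Y i)) = Ici (a i) :=
  Subset.antisymm (forall_mem_image.2 fun _ hx => ha.2 hx i)
    fun _ hy => hC i hy ⟨a, ha.1, rfl⟩

theorem inter_Ici_mem_tensor {C : CC (∀ i, Y i)} (hC : C ∈ tensor Y) {c : ∀ i, Y i}
    (hc : c ∈ (C : Set (∀ i, Y i))) (h : (C : Set (∀ i, Y i)) ∩ Ici c ∈ CC (∀ i, Y i)) :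
    (⟨_, h⟩ : CC (∀ i, Y i)) ∈ tensor Y := by
  rintro i _ b hab ⟨x, ⟨hxC, hcx⟩, rfl⟩
  obtain ⟨y, hyC, rfl⟩ := hC i hab ⟨x, hxC, rfl⟩
  rcases C.2.2.2.total hc hyC with hcy | hyc
  · exact ⟨y, ⟨hyC, hcy⟩, rfl⟩
  · exact ⟨c, ⟨hc, self_mem_Ici⟩, le_antisymm ((hcx i).trans hab) (hyc i)⟩

theorem image_Ici_mem_tensor {Z : Type*} [Preorder Z] {F : Z → ∀ i, Y i}
    (hp : ∀ i, ∀ z : Z, ∀ w : Y i, F z i ≤ w → ∃ z', z ≤ z' ∧ F z' i = w) {z : Z}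
    (h : F '' Ici z ∈ CC (∀ i, Y i)) : (⟨_, h⟩ : CC (∀ i, Y i)) ∈ tensor Y := by
  rintro i _ w hw ⟨_, ⟨u, hzu, rfl⟩, rfl⟩
  obtain ⟨u', huu', rfl⟩ := hp i u w hw
  exact ⟨F u', ⟨u', hzu.trans huu', rfl⟩, rfl⟩

theorem exists_lec_isLeast_of_mem [∀ i, PriestleySpace (Y i)] (C : tensor Y) {c : ∀ i, Y i}
    (hc : c ∈ (C.1 : Set (∀ i, Y i))) :
    ∃ K : tensor Y, lec (C.1 : Set (∀ i, Y i)) K.1 ∧ IsLeast (K.1 : Set (∀ i, Y i)) c :=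
  ⟨⟨⟨_, inter_Ici_mem_CC C.1.2 hc⟩, inter_Ici_mem_tensor C.2 hc _⟩, lec_inter_Ici _ c,
    ⟨hc, self_mem_Ici⟩, fun _ hx => hx.2⟩

theorem exists_lec_apply_eq [∀ i, PriestleySpace (Y i)] {m : CC (∀ i, Y i) → ∀ i, Y i}
    (hm : ∀ C : CC (∀ i, Y i), IsLeast (C : Set (∀ i, Y i)) (m C)) (C : tensor Y) {i : I}
    {z : Y i} (hz : m C.1 i ≤ z) :
    ∃ K : tensor Y, lec (C.1 : Set (∀ i, Y i)) K.1 ∧ m K.1 i = z := by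
  rw [← mem_Ici, ← image_eval_eq_Ici C.2 (hm C.1)] at hz
  obtain ⟨c, hc, rfl⟩ := hz
  obtain ⟨K, hCK, hK⟩ := exists_lec_isLeast_of_mem C hc
  exact ⟨K, hCK, by rw [(hm K.1).unique hK]⟩

theorem coe_eq_image_Ici [∀ i, PriestleySpace (Y i)] {Z : Type*} [Preorder Z]
    {F : Z → ∀ i, Y i} {g : Z → tensor Y}
    (hmono : ∀ z₁ z₂ : Z, z₁ ≤ z₂ → lec ((g z₁).1 : Set (∀ i, Y i)) (g z₂).1)
    (hp : ∀ z : Z, ∀ K : tensor Y, lec ((g z).1 : Set (∀ i, Y i)) K.1 → ∃ z', z ≤ z' ∧ g z' = K)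
    (hgF : ∀ z, IsLeast ((g z).1 : Set (∀ i, Y i)) (F z)) (z : Z) :
    ((g z).1 : Set (∀ i, Y i)) = F '' Ici z := by
  refine Subset.antisymm (fun x hx => ?_) ?_
  · obtain ⟨K, hzK, hK⟩ := exists_lec_isLeast_of_mem (g z) hx
    obtain ⟨z', hzz', rfl⟩ := hp z K hzK
    exact ⟨z', hzz', (hgF z').unique hK⟩
  · rintro _ ⟨u, hu, rfl⟩
    exact (hmono z u hu).1 (hgF u).1

end Tensor

theorem stmt11_general (I : Type*) (Y : I → Type*) [∀ i, TopologicalSpace (Y i)]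
    [∀ i, PartialOrder (Y i)] [∀ i, CompactSpace (Y i)] [∀ i, PriestleySpace (Y i)]
    (m : ↥(CC (∀ i, Y i)) → (∀ i, Y i))
    (hm : ∀ C : ↥(CC (∀ i, Y i)), m C ∈ (C : Set (∀ i, Y i)) ∧
      ∀ x ∈ (C : Set (∀ i, Y i)), m C ≤ x) :
    (∀ i, Continuous (fun C : ↥(tensor Y) => m C.1 i)) ∧
    (∀ i, ∀ C₁ C₂ : ↥(tensor Y),
      lec (C₁.1 : Set (∀ i, Y i)) (C₂.1 : Set (∀ i, Y i)) → m C₁.1 i ≤ m C₂.1 i) ∧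
    (∀ i, ∀ C : ↥(tensor Y), ∀ z : Y i, m C.1 i ≤ z →
      ∃ K : ↥(tensor Y), lec (C.1 : Set (∀ i, Y i)) (K.1 : Set (∀ i, Y i)) ∧ m K.1 i = z) ∧
    (∀ (Z : Type*) [TopologicalSpace Z] [PartialOrder Z] [CompactSpace Z] [PriestleySpace Z],
      (∀ V : Set Z, IsClopen V → IsClopen {x : Z | ∃ y ∈ V, x ≤ y}) →
      (∀ z : Z, IsChain (· ≤ ·) (Ici z)) →
      ∀ f : ∀ i, Z → Y i,
        (∀ i, Continuous (f i)) →
        (∀ i, Monotone (f i)) →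
        (∀ i, ∀ z : Z, ∀ w : Y i, f i z ≤ w → ∃ z', z ≤ z' ∧ f i z' = w) →
        ∃! g : Z → ↥(tensor Y),
          Continuous g ∧
          (∀ z₁ z₂ : Z, z₁ ≤ z₂ →
            lec ((g z₁).1 : Set (∀ i, Y i)) ((g z₂).1 : Set (∀ i, Y i))) ∧
          (∀ z : Z, ∀ K : ↥(tensor Y),
            lec ((g z).1 : Set (∀ i, Y i)) (K.1 : Set (∀ i, Y i)) → ∃ z', z ≤ z' ∧ g z' = K) ∧
          (∀ i, ∀ z : Z, m (g z).1 i = f i z)) := by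
  have hleast (C : CC (∀ i, Y i)) : IsLeast (C : Set (∀ i, Y i)) (m C) :=
    ⟨(hm C).1, fun x hx => (hm C).2 x hx⟩
  refine ⟨fun i => ((continuous_apply i).comp (continuous_of_isLeast hleast)).comp
      continuous_subtype_val, fun i C₁ C₂ h => le_of_lec h (hleast _) (hleast _) i,
    fun i C z => exists_lec_apply_eq hleast C, ?_⟩
  intro Z _ _ _ _ hEsa hRoot f hfc hfm hfp
  let F : Z → ∀ i, Y i := fun z i => f i z
  have hFc : Continuous F := continuous_pi hfc
  have hFm : Monotone F := fun _ _ h i => hfm i h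
  let g : Z → tensor Y := fun z =>
    ⟨_, image_Ici_mem_tensor (F := F) hfp (image_Ici_mem_CC hFc hFm (hRoot z))⟩
  have hgF (z : Z) : m (g z).1 = F z := (hleast _).unique (isLeast_image_Ici hFm z)
  refine ⟨g, ⟨(continuous_of_coe_eq_image_Ici hEsa hFc fun _ => rfl).subtype_mk _,
    fun z₁ z₂ h => lec_image_Ici hFm (hRoot z₁) h, fun z K hzK => ?_,
    fun i z => congrFun (hgF z) i⟩,
    fun g' ⟨_, hmono', hp', hf'⟩ => funext fun z => Subtype.ext (Subtype.ext ?_)⟩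
  · obtain ⟨z', hzz', hK⟩ := exists_image_Ici_eq_of_lec hFc hFm (hRoot z) K.1.2.2.1 K.1.2.1 hzK
    exact ⟨z', hzz', Subtype.ext (Subtype.ext hK)⟩
  · have hg'F (w : Z) : m (g' w).1 = F w := funext fun i => hf' i w
    exact coe_eq_image_Ici hmono' hp' (fun w => hg'F w ▸ hleast _) z

/-- `⊗Yᵢ` with the maps `pᵢ = πᵢ ∘ m` is the product of the family `(Yᵢ)` in the
category of Esakia root systems and continuous p-morphisms. -/
theorem stmt11 (I : Type*) (Y : I → Type*) [∀ i, TopologicalSpace (Y i)]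
    [∀ i, PartialOrder (Y i)] [∀ i, CompactSpace (Y i)] [∀ i, PriestleySpace (Y i)]
    (hEsa : ∀ i, ∀ V : Set (Y i), IsClopen V → IsClopen {x : Y i | ∃ y ∈ V, x ≤ y})
    (hRoot : ∀ i, ∀ y : Y i, IsChain (· ≤ ·) (Ici y))
    (m : ↥(CC (∀ i, Y i)) → (∀ i, Y i))
    (hm : ∀ C : ↥(CC (∀ i, Y i)), m C ∈ (C : Set (∀ i, Y i)) ∧
      ∀ x ∈ (C : Set (∀ i, Y i)), m C ≤ x) :
    (∀ i, Continuous (fun C : ↥(tensor Y) => m C.1 i)) ∧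
    (∀ i, ∀ C₁ C₂ : ↥(tensor Y),
      lec (C₁.1 : Set (∀ i, Y i)) (C₂.1 : Set (∀ i, Y i)) → m C₁.1 i ≤ m C₂.1 i) ∧
    (∀ i, ∀ C : ↥(tensor Y), ∀ z : Y i, m C.1 i ≤ z →
      ∃ K : ↥(tensor Y), lec (C.1 : Set (∀ i, Y i)) (K.1 : Set (∀ i, Y i)) ∧ m K.1 i = z) ∧
    (∀ (Z : Type*) [TopologicalSpace Z] [PartialOrder Z] [CompactSpace Z] [PriestleySpace Z],
      (∀ V : Set Z, IsClopen V → IsClopen {x : Z | ∃ y ∈ V, x ≤ y}) →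
      (∀ z : Z, IsChain (· ≤ ·) (Ici z)) →
      ∀ f : ∀ i, Z → Y i,
        (∀ i, Continuous (f i)) →
        (∀ i, Monotone (f i)) →
        (∀ i, ∀ z : Z, ∀ w : Y i, f i z ≤ w → ∃ z', z ≤ z' ∧ f i z' = w) →
        ∃! g : Z → ↥(tensor Y),
          Continuous g ∧
          (∀ z₁ z₂ : Z, z₁ ≤ z₂ →
            lec ((g z₁).1 : Set (∀ i, Y i)) ((g z₂).1 : Set (∀ i, Y i))) ∧
          (∀ z : Z, ∀ K : ↥(tensor Y),
            lec ((g z).1 : Set (∀ i, Y i)) (K.1 : Set (∀ i, Y i)) → ∃ z', z ≤ z' ∧ g z' = K) ∧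
          (∀ i, ∀ z : Z, m (g z).1 i = f i z)) :=
  stmt11_general I Y m hm
end

section
/- Let S be an infinite set and n ≥ 2 a natural number. Then CC_n(2^S) is not a co-Esakia space: there exists a clopen subset 𝒱 of CC_n(2^S) whose ⊴-upset ⇑𝒱 = {C ∈ CC_n(2^S) | ∃ K ∈ 𝒱, K ⊴ C} is not clopen in CC_n(2^S). -/
open Set TopologicalSpace

variable {X : Type*} [TopologicalSpace X] [Preorder X]

/-- `CC_n(X)`: the nonempty (closed) chains of `X` of cardinality at most `n`, with the
subspace topology and order `⊴` induced by `CC(X)`. -/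
abbrev CCn (X : Type*) [TopologicalSpace X] [Preorder X] (n : ℕ) : Type _ :=
  {C : ↥(CC X) // (C : Set X).encard ≤ (n : ℕ∞)}

/-!
Fix `s₀ ∈ S`, let `V = {f | f s₀ = 1}` and `𝒱 = ◇Vᶜ`, which is clopen. The singleton chain `{⊤}`
lies in `⇑𝒱`, above `{x₀, ⊤}` where `x₀` is `⊤` switched off at `s₀`. A Vietoris neighbourhood
of `{⊤}` only constrains finitely many coordinates, so it contains a chain of `n` points of `V`
through `⊤`. Such a chain is not in `⇑𝒱`: a `K ∈ 𝒱` below it would strictly contain it (`K` meets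
`Vᶜ`), hence have more than `n` points.
-/

lemma exists_finset_forall_eq_mem {ι : Type*} {A : ι → Type*} [∀ i, TopologicalSpace (A i)]
    {U : Set (∀ i, A i)} {x : ∀ i, A i} (hU : U ∈ nhds x) :
    ∃ I : Finset ι, ∀ f : ∀ i, A i, (∀ i ∈ I, f i = x i) → f ∈ U := by
  simp only [nhds_pi, Filter.mem_pi'] at hU
  obtain ⟨I, t, htx, hts⟩ := hU
  exact ⟨I, fun f hf => hts fun i hi => hf i hi ▸ mem_of_mem_nhds (htx i)⟩

/- Induction on the generated topology: a subbasic box `□W ∋ C₀` contains every chain inside `W`,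
and a subbasic diamond `◇W ∋ C₀` contains every chain containing `C₀`. -/
lemma exists_isClopen_forall_mem_of_isOpen {𝒪 : Set (CC X)} (h𝒪 : IsOpen 𝒪) {C₀ : CC X}
    (hC₀ : C₀ ∈ 𝒪) :
    ∃ U : Set X, IsClopen U ∧ (C₀ : Set X) ⊆ U ∧
      ∀ C : CC X, (C₀ : Set X) ⊆ C → (C : Set X) ⊆ U → C ∈ 𝒪 := by
  induction h𝒪 with
  | basic 𝒲 h𝒲 =>
    obtain ⟨W, hW, rfl | rfl⟩ := h𝒲
    · exact ⟨W, hW, hC₀, fun C _ hCW => hCW⟩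
    · exact ⟨univ, isClopen_univ, subset_univ _, fun C hC₀C _ =>
        hC₀.mono (inter_subset_inter_left W hC₀C)⟩
  | univ => exact ⟨univ, isClopen_univ, subset_univ _, fun _ _ _ => trivial⟩
  | inter 𝒪₁ 𝒪₂ _ _ ih₁ ih₂ =>
    obtain ⟨U₁, hU₁, hC₀U₁, h₁⟩ := ih₁ hC₀.1
    obtain ⟨U₂, hU₂, hC₀U₂, h₂⟩ := ih₂ hC₀.2
    exact ⟨U₁ ∩ U₂, hU₁.inter hU₂, subset_inter hC₀U₁ hC₀U₂, fun C hC₀C hCU =>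
      ⟨h₁ C hC₀C (hCU.trans inter_subset_left), h₂ C hC₀C (hCU.trans inter_subset_right)⟩⟩
  | sUnion 𝔒 _ ih =>
    obtain ⟨𝒪, h𝒪, hC₀𝒪⟩ := hC₀
    obtain ⟨U, hU, hC₀U, h⟩ := ih 𝒪 h𝒪 hC₀𝒪
    exact ⟨U, hU, hC₀U, fun C hC₀C hCU => ⟨𝒪, h𝒪, h C hC₀C hCU⟩⟩

lemma isClopen_ccDia {V : Set X} (hV : IsClopen V) : IsClopen (ccDia V) := by
  have hcompl : (ccDia V)ᶜ = ccBox Vᶜ := by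
    ext C
    simp [ccDia, ccBox, not_nonempty_iff_eq_empty, ← disjoint_iff_inter_eq_empty,
      subset_compl_iff_disjoint_right]
  refine ⟨?_, isOpen_generateFrom_of_mem ⟨V, hV, Or.inr rfl⟩⟩
  rw [← isOpen_compl_iff, hcompl]
  exact isOpen_generateFrom_of_mem ⟨Vᶜ, hV.compl, Or.inl rfl⟩

def CCn.ofChain [T1Space X] {n : ℕ} (C : Set X) (hne : C.Nonempty) (hC : IsChain (· ≤ ·) C)
    (hcard : C.encard ≤ n) : CCn X n :=
  ⟨⟨C, hne, (finite_of_encard_le_coe hcard).isClosed, hC⟩, hcard⟩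

lemma lec_singleton_of_isGreatest {α : Type*} [PartialOrder α] {C : Set α} {y : α}
    (h : IsGreatest C y) : lec C {y} :=
  ⟨singleton_subset_iff.2 h.1, fun x hx z hz hxz => by
    rw [mem_singleton_iff] at hx ⊢
    exact le_antisymm (h.2 hz) (hx ▸ hxz)⟩

lemma exists_strictAnti_eqOn_top {S : Type*} [Infinite S] {T : Set S} (hT : T.Finite) :
    ∃ y : ℕ → S → Bool, y 0 = ⊤ ∧ StrictAnti y ∧ ∀ k, EqOn (y k) ⊤ T := by
  classical
  set e := hT.infinite_compl.natEmbedding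
  refine ⟨fun k s => decide (s ∉ (fun j => (e j : S)) '' Iio k), ?_,
    strictAnti_nat_of_succ_lt fun k => Pi.lt_def.2 ⟨fun s => ?_, e k, ?_⟩, fun k s hs => ?_⟩
  · ext s
    simp
  · simp only [decide_eq_true_eq, Bool.le_iff_imp]
    exact fun h h' => h (image_mono (Iio_subset_Iio k.le_succ) h')
  · have hk : (e k : S) ∉ (fun j => (e j : S)) '' Iio k := by
      rintro ⟨j, hj, hjk⟩
      exact (mem_Iio.mp hj).ne (e.injective (Subtype.val_injective hjk))
    have hk' : (e k : S) ∈ (fun j => (e j : S)) '' Iio (k + 1) := ⟨k, k.lt_succ_self, rfl⟩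
    simp [hk, hk']
  · show decide _ = true
    simp only [decide_eq_true_eq]
    rintro ⟨j, -, rfl⟩
    exact (e j).2 hs

lemma exists_isChain_encard_eq_forall_eqOn_top {S : Type*} [Infinite S] {T : Set S}
    (hT : T.Finite) {n : ℕ} (hn : n ≠ 0) :
    ∃ C : Set (S → Bool), ⊤ ∈ C ∧ IsChain (· ≤ ·) C ∧ C.encard = n ∧ ∀ f ∈ C, EqOn f ⊤ T := by
  obtain ⟨y, hy0, hy, hyT⟩ := exists_strictAnti_eqOn_top hT
  refine ⟨y '' Iio n, ⟨0, mem_Iio.2 (Nat.pos_of_ne_zero hn), hy0⟩,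
    hy.antitone.isChain_range.mono (image_subset_range _ _), ?_, ?_⟩
  · rw [hy.injective.injOn.encard_image, ← Finset.coe_range, encard_coe_eq_coe_finsetCard,
      Finset.card_range]
  · rintro _ ⟨k, -, rfl⟩
    exact hyT k

lemma not_lec_of_encard_eq {α : Type*} [Preorder α] {n : ℕ} {K C V : Set α}
    (hK : K.encard ≤ n) (hC : C.encard = n) (hCV : C ⊆ V) (hKV : ¬ K ⊆ V) :
    ¬ lec K C := fun hKC =>
  ((finite_of_encard_le_coe hC.le).encard_lt_encard
    (ssubset_of_subset_not_subset hKC.1 fun h => hKV (h.trans hCV))).not_ge (hC ▸ hK)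

/-- For `S` infinite and `n ≥ 2`, `CC_n(2^S)` is not a co-Esakia space: some clopen
subset has a non-clopen `⊴`-upset. -/
theorem stmt17 (S : Type*) [Infinite S] (n : ℕ) (hn : 2 ≤ n) :
    ∃ 𝒱 : Set (CCn (S → Bool) n), IsClopen 𝒱 ∧
      ¬ IsClopen {C : CCn (S → Bool) n |
          ∃ K ∈ 𝒱, lec ((K : ↥(CC (S → Bool))) : Set (S → Bool))
            ((C : ↥(CC (S → Bool))) : Set (S → Bool))} := by
  classical
  obtain ⟨s₀⟩ := (inferInstance : Nonempty S)
  set V : Set (S → Bool) := {f | f s₀ = true}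
  have hV : IsClopen V := (isClopen_discrete {true}).preimage (continuous_apply s₀)
  refine ⟨Subtype.val ⁻¹' ccDia Vᶜ, (isClopen_ccDia hV.compl).preimage continuous_subtype_val,
    fun hclopen => ?_⟩
  obtain ⟨𝒪, h𝒪, hpre⟩ := isOpen_induced_iff.mp hclopen.isOpen
  set x₀ : S → Bool := Function.update ⊤ s₀ false
  have hx₀ : x₀ ≠ ⊤ := fun h => by simpa [x₀] using congrFun h s₀
  let top : CCn (S → Bool) n := CCn.ofChain {⊤} (singleton_nonempty _) IsChain.singleton
    (by rw [encard_singleton]; exact_mod_cast (by omega : 1 ≤ n))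
  have htop : top ∈ Subtype.val ⁻¹' 𝒪 := by
    rw [hpre]
    exact ⟨CCn.ofChain {x₀, ⊤} (insert_nonempty _ _) (IsChain.pair le_top)
      (by rw [encard_pair hx₀]; exact_mod_cast hn), ⟨x₀, mem_insert _ _, by simp [V, x₀]⟩,
      lec_singleton_of_isGreatest ⟨mem_insert_of_mem _ rfl, fun _ _ => le_top⟩⟩
  obtain ⟨U, hU, htopU, hU𝒪⟩ := exists_isClopen_forall_mem_of_isOpen h𝒪 htop
  obtain ⟨I, hI⟩ := exists_finset_forall_eq_mem (hU.isOpen.mem_nhds (htopU rfl))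
  obtain ⟨C, htopC, hC, hCcard, hCT⟩ :=
    exists_isChain_encard_eq_forall_eqOn_top (I.finite_toSet.insert s₀) (by omega : n ≠ 0)
  have hCn : CCn.ofChain C ⟨⊤, htopC⟩ hC hCcard.le ∈ Subtype.val ⁻¹' 𝒪 :=
    hU𝒪 _ (singleton_subset_iff.2 htopC) fun f hf =>
      hI f fun s hs => hCT f hf (mem_insert_of_mem _ hs)
  rw [hpre] at hCn
  obtain ⟨K, ⟨x, hxK, hxV⟩, hKC⟩ := hCn
  exact not_lec_of_encard_eq K.2 hCcard (fun f hf => hCT f hf (mem_insert _ _))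
    (fun h => hxV (h hxK)) hKC
end
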